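/- Let N ≥ 2 and let A be a symmetric, irreflexive adjacency relation on Fin N whose associated simple graph is connected. Let P denote the number of SIR paths from a configuration with exactly one infected node and all other nodes susceptible to the all-recovered configuration. Then N! ≤ P and 2^(N−1)·P < (2N−1)!. -/

import Mathlib

/-!
Recording which node changes at each step identifies an SIR path with a word over the nodes; a
word leading from one infected node to the all-recovered configuration touches that node once and
every other node twice.

Lower bound: by connectivity the infection can reach every node, after which all `N!` recovery
orders are admissible.

Upper bound: tagging the two occurrences of each node `m ≠ i₀` by `(m, b)` and `(m, !b)`, in
order, turns a word together with the `2^(N-1)` choices of the `b`'s injectively into an ordering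
of the `2N - 1` tags other than `(i₀, true)`. Orderings starting with `i₀` are never hit, since
the recovery of `i₀` as first event leaves nobody infected.
-/

/-- An SIR transition: either a neighbour infects a susceptible node,
or an infected node recovers. -/
def SIRTrans {N : ℕ} (A : Fin N → Fin N → Prop) (x y : Fin N → Fin 3) : Prop :=
  (∃ m : Fin N, x m = 0 ∧ y m = 1 ∧ (∃ j : Fin N, A j m ∧ x j = 1) ∧
    ∀ i : Fin N, i ≠ m → y i = x i) ∨
  (∃ m : Fin N, x m = 1 ∧ y m = 2 ∧ ∀ i : Fin N, i ≠ m → y i = x i)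

/-- An SIR path from `x` to `y`: a nonempty finite sequence of configurations
starting at `x`, ending at `y`, with consecutive pairs being SIR transitions. -/
def IsSIRPath {N : ℕ} (A : Fin N → Fin N → Prop) (x y : Fin N → Fin 3)
    (L : List (Fin N → Fin 3)) : Prop :=
  L ≠ [] ∧ L.head? = some x ∧ L.getLast? = some y ∧ L.IsChain (SIRTrans A)

/-- The number of SIR paths from `x` to `y`. -/
noncomputable def numSIRPaths {N : ℕ} (A : Fin N → Fin N → Prop)
    (x y : Fin N → Fin 3) : ℕ :=
  Set.ncard {L : List (Fin N → Fin 3) | IsSIRPath A x y L}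

theorem List.scanl_injective {α β : Type*} {f : β → α → β}
    (hf : ∀ b, Function.Injective (f b)) (b : β) : Function.Injective (List.scanl f b) := by
  intro u v huv
  induction u generalizing b v with
  | nil => cases v <;> simp_all
  | cons a u ih =>
    cases v with
    | nil => simp at huv
    | cons a' v =>
      simp only [List.scanl_cons, List.cons.injEq, true_and] at huv
      have ha : a = a' := hf b (by simpa using congrArg List.head? huv)
      subst ha
      rw [ih _ huv]

theorem List.sum_count_eq_length {α : Type*} [Fintype α] [DecidableEq α] (w : List α) :
    ∑ a, w.count a = w.length := by
  simpa using Multiset.sum_count_eq_card (s := Finset.univ) (m := (w : Multiset α)) (by simp)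

section Tagging

variable {α : Type*} [DecidableEq α]

def tagAlternately (f : α → Bool) : List α → List (α × Bool)
  | [] => []
  | m :: w => (m, f m) :: tagAlternately (Function.update f m (!f m)) w

@[simp]
theorem map_fst_tagAlternately (f : α → Bool) (w : List α) :
    (tagAlternately f w).map Prod.fst = w := by
  induction w generalizing f with
  | nil => rfl
  | cons m w ih => simp [tagAlternately, ih]

@[simp]
theorem length_tagAlternately (f : α → Bool) (w : List α) :
    (tagAlternately f w).length = w.length := by
  simpa only [List.length_map] using congrArg List.length (map_fst_tagAlternately f w)

theorem snd_eq_of_mem_tagAlternately {f : α → Bool} {w : List α} {m : α} {b : Bool}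
    (hm : w.count m ≤ 1) (h : (m, b) ∈ tagAlternately f w) : b = f m := by
  induction w generalizing f with
  | nil => simp [tagAlternately] at h
  | cons n w ih =>
    rcases List.mem_cons.1 h with h | h
    · simp_all
    · by_cases hmn : m = n
      · subst hmn
        have : m ∈ w := by simpa using List.mem_map_of_mem (f := Prod.fst) h
        rw [List.count_cons_self, ← List.count_pos_iff] at *
        omega
      · rw [List.count_cons_of_ne (Ne.symm hmn)] at hm
        simpa [Function.update_of_ne hmn] using ih hm h

theorem nodup_tagAlternately (f : α → Bool) {w : List α} (hw : ∀ m, w.count m ≤ 2) :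
    (tagAlternately f w).Nodup := by
  induction w generalizing f with
  | nil => exact List.nodup_nil
  | cons n w ih =>
    refine List.nodup_cons.2 ⟨fun h => ?_, ih _ fun m => ?_⟩
    · have hn : w.count n ≤ 1 := by have := hw n; rw [List.count_cons_self] at this; omega
      simpa using snd_eq_of_mem_tagAlternately hn h
    · have := hw m
      rw [List.count_cons] at this
      omega

theorem apply_eq_of_tagAlternately_eq {f g : α → Bool} {w : List α}
    (h : tagAlternately f w = tagAlternately g w) {m : α} (hm : m ∈ w) : f m = g m := by
  induction w generalizing f g with
  | nil => simp at hm
  | cons n w ih =>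
    simp only [tagAlternately, List.cons.injEq, Prod.mk.injEq, true_and] at h
    by_cases hmn : m = n
    · exact hmn ▸ h.1
    · simpa [Function.update_of_ne hmn] using ih h.2 (List.mem_of_ne_of_mem hmn hm)

theorem length_eq_of_count_eq [Fintype α] {i₀ : α} {w : List α}
    (hw : ∀ m, w.count m = if m = i₀ then 1 else 2) : w.length = 2 * Fintype.card α - 1 := by
  have hcard : 0 < Fintype.card α := Fintype.card_pos_iff.2 ⟨i₀⟩
  rw [← List.sum_count_eq_length]
  simp only [hw, Finset.sum_ite, Finset.filter_eq', Finset.filter_ne', Finset.mem_univ, if_true,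
    Finset.sum_const, Finset.card_singleton, Finset.card_erase_of_mem, Finset.card_univ,
    smul_eq_mul]
  omega

theorem tagAlternately_perm [Fintype α] {i₀ : α} {f : α → Bool} (hf : f i₀ = false)
    {w : List α} (hw : ∀ m, w.count m = if m = i₀ then 1 else 2) :
    (tagAlternately f w).Perm (Finset.univ.erase (i₀, true)).toList := by
  have hcard : 0 < Fintype.card α := Fintype.card_pos_iff.2 ⟨i₀⟩
  refine ((nodup_tagAlternately f fun m => ?_).subperm fun p hp => ?_).perm_of_length_le ?_
  · rw [hw m]
    split <;> omega
  · refine Finset.mem_toList.2 (Finset.mem_erase.2 ⟨fun h => ?_, Finset.mem_univ p⟩)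
    subst h
    simpa [hf] using snd_eq_of_mem_tagAlternately (by simp [hw]) hp
  · simp [length_eq_of_count_eq hw, Finset.card_erase_of_mem]
    omega

theorem ncard_lt_factorial_of_forall_perm {β : Type*} {S : Set (List β)} {t t' : List β}
    (hS : ∀ l ∈ S, l.Perm t) (ht' : t'.Perm t) (ht'S : t' ∉ S) :
    S.ncard < t.length.factorial := by
  classical
  have hperms : {l : List β | l.Perm t} = (t.permutations.toFinset : Set (List β)) := by
    ext l
    simp [List.mem_permutations]
  calc S.ncard < {l : List β | l.Perm t}.ncard :=
        Set.ncard_lt_ncard ((Set.ssubset_iff_of_subset hS).2 ⟨t', ht', ht'S⟩)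
          (hperms ▸ Finset.finite_toSet _)
    _ ≤ t.permutations.length := by
        rw [hperms, Set.ncard_coe_finset]
        exact List.toFinset_card_le _
    _ = t.length.factorial := List.length_permutations t

theorem two_pow_mul_ncard_lt [Fintype α] (i₀ : α) (W : Set (List α))
    (hcount : ∀ w ∈ W, ∀ m, w.count m = if m = i₀ then 1 else 2)
    (hhead : ∀ w ∈ W, w.head? ≠ some i₀) :
    2 ^ (Fintype.card α - 1) * W.ncard < (2 * Fintype.card α - 1).factorial := by
  have hcard : 0 < Fintype.card α := Fintype.card_pos_iff.2 ⟨i₀⟩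
  let extend (f : {m // m ≠ i₀} → Bool) (m : α) : Bool := if h : m = i₀ then false else f ⟨m, h⟩
  let tag (p : ({m // m ≠ i₀} → Bool) × List α) : List (α × Bool) :=
    tagAlternately (extend p.1) p.2
  let E : Finset (α × Bool) := Finset.univ.erase (i₀, true)
  have htag_perm : ∀ l ∈ tag '' (Set.univ ×ˢ W), l.Perm E.toList := by
    rintro _ ⟨⟨f, w⟩, ⟨-, hw⟩, rfl⟩
    exact tagAlternately_perm (by simp [extend]) (hcount w hw)
  have htag_inj : Set.InjOn tag (Set.univ ×ˢ W) := by
    rintro ⟨f, w⟩ ⟨-, hw⟩ ⟨f', w'⟩ - h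
    obtain rfl : w = w' := by simpa [tag] using congrArg (List.map Prod.fst) h
    refine Prod.ext (funext fun m => ?_) rfl
    have hm : m.1 ∈ w := by
      rw [← List.count_pos_iff, hcount w hw, if_neg m.2]
      omega
    simpa [extend, m.2] using apply_eq_of_tagAlternately_eq h hm
  have hE : (i₀, false) ∈ E := by simp [E]
  have ht_perm : ((i₀, false) :: (E.erase (i₀, false)).toList).Perm E.toList := by
    have := (Finset.toList_insert (Finset.notMem_erase (i₀, false) E)).symm
    rwa [Finset.insert_erase hE] at this
  have ht_not_mem : (i₀, false) :: (E.erase (i₀, false)).toList ∉ tag '' (Set.univ ×ˢ W) := by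
    rintro ⟨⟨f, w⟩, ⟨-, hw⟩, h⟩
    exact hhead w hw (by simpa [tag] using congrArg (fun l => (l.map Prod.fst).head?) h)
  calc 2 ^ (Fintype.card α - 1) * W.ncard = (Set.univ ×ˢ W).ncard := by
        simp [Set.ncard_prod, Set.ncard_univ, Fintype.card_subtype_compl]
    _ = (tag '' (Set.univ ×ˢ W)).ncard := htag_inj.ncard_image.symm
    _ < E.toList.length.factorial :=
        ncard_lt_factorial_of_forall_perm htag_perm ht_perm ht_not_mem
    _ = (2 * Fintype.card α - 1).factorial := by
        simp [E, Finset.card_erase_of_mem]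
        congr 1
        omega

end Tagging

namespace SIR

variable {N : ℕ}

def bump (x : Fin N → Fin 3) (m : Fin N) : Fin N → Fin 3 :=
  Function.update x m (x m + 1)

def CanBump (A : Fin N → Fin N → Prop) (x : Fin N → Fin 3) (m : Fin N) : Prop :=
  (x m = 0 ∧ ∃ j, A j m ∧ x j = 1) ∨ x m = 1

def IsSIRWord (A : Fin N → Fin N → Prop) : (Fin N → Fin 3) → List (Fin N) → Prop
  | _, [] => True
  | x, m :: w => CanBump A x m ∧ IsSIRWord A (bump x m) w

def sirWords (A : Fin N → Fin N → Prop) (x y : Fin N → Fin 3) : Set (List (Fin N)) :=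
  {w | IsSIRWord A x w ∧ w.foldl bump x = y}

variable {A : Fin N → Fin N → Prop}

@[simp]
theorem bump_self (x : Fin N → Fin 3) (m : Fin N) : bump x m m = x m + 1 :=
  Function.update_self _ _ _

@[simp]
theorem bump_of_ne (x : Fin N → Fin 3) {m k : Fin N} (h : k ≠ m) : bump x m k = x k :=
  Function.update_of_ne h _ _

theorem bump_injective (x : Fin N → Fin 3) : Function.Injective (bump x) := by
  intro m n h
  by_contra hmn
  have hm := congrFun h m
  rw [bump_self, bump_of_ne x hmn] at hm
  exact (by decide : ∀ a : Fin 3, a + 1 ≠ a) _ hm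

theorem sirTrans_iff {x y : Fin N → Fin 3} :
    SIRTrans A x y ↔ ∃ m, CanBump A x m ∧ y = bump x m := by
  constructor
  · rintro (⟨m, hx, hy, hj, hrest⟩ | ⟨m, hx, hy, hrest⟩)
    all_goals
      refine ⟨m, by simp [CanBump, *], funext fun k => ?_⟩
      by_cases hk : k = m
      · subst hk
        simp [hx, hy]
      · simp [hk, hrest k hk]
  · rintro ⟨m, ⟨hx, hj⟩ | hx, rfl⟩
    · exact Or.inl ⟨m, hx, by simp [hx], hj, fun k hk => bump_of_ne x hk⟩
    · exact Or.inr ⟨m, hx, by simp [hx], fun k hk => bump_of_ne x hk⟩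

theorem CanBump.val_bump_self {x : Fin N → Fin 3} {m : Fin N} (h : CanBump A x m) :
    (bump x m m : ℕ) = x m + 1 := by
  rcases h with ⟨h, -⟩ | h <;> simp [h]

theorem IsSIRWord.isChain_scanl {x : Fin N → Fin 3} {w : List (Fin N)} (hw : IsSIRWord A x w) :
    (w.scanl bump x).IsChain (SIRTrans A) := by
  induction w generalizing x with
  | nil => exact List.isChain_singleton x
  | cons m w ih =>
    rw [List.scanl_cons]
    refine (ih hw.2).cons fun y hy => ?_
    rw [List.head?_scanl, Option.mem_def, Option.some_inj] at hy
    exact sirTrans_iff.2 ⟨m, hw.1, hy.symm⟩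

theorem IsSIRWord.append {x : Fin N → Fin 3} {u v : List (Fin N)} (hu : IsSIRWord A x u)
    (hv : IsSIRWord A (u.foldl bump x) v) : IsSIRWord A x (u ++ v) := by
  induction u generalizing x with
  | nil => exact hv
  | cons m u ih => exact ⟨hu.1, ih hu.2 hv⟩

theorem IsSIRWord.val_foldl {x : Fin N → Fin 3} {w : List (Fin N)} (hw : IsSIRWord A x w)
    (k : Fin N) : ((w.foldl bump x) k : ℕ) = x k + w.count k := by
  induction w generalizing x with
  | nil => simp
  | cons m w ih =>
    rw [List.foldl_cons, ih hw.2, List.count_cons]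
    by_cases hkm : k = m
    · subst hkm
      rw [hw.1.val_bump_self, beq_self_eq_true, if_pos rfl]
      omega
    · simp [hkm, Ne.symm hkm]

theorem IsSIRWord.eq_nil_of_forall_ne_one {x : Fin N → Fin 3} {w : List (Fin N)}
    (hw : IsSIRWord A x w) (hx : ∀ k, x k ≠ 1) : w = [] := by
  cases w with
  | nil => rfl
  | cons m w => rcases hw.1 with ⟨-, j, -, hj⟩ | hm <;> simp_all

theorem isSIRPath_scanl {x y : Fin N → Fin 3} {w : List (Fin N)} (hw : w ∈ sirWords A x y) :
    IsSIRPath A x y (w.scanl bump x) :=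
  ⟨List.scanl_ne_nil, List.head?_scanl, by rw [List.getLast?_scanl, hw.2], hw.1.isChain_scanl⟩

theorem exists_mem_sirWords_of_isSIRPath {x y : Fin N → Fin 3} {L : List (Fin N → Fin 3)}
    (hL : IsSIRPath A x y L) : ∃ w ∈ sirWords A x y, w.scanl bump x = L := by
  obtain ⟨hne, hhead, hlast, hchain⟩ := hL
  induction L generalizing x with
  | nil => contradiction
  | cons a L ih =>
    obtain rfl : a = x := by simpa using hhead
    cases L with
    | nil => exact ⟨[], ⟨trivial, by simpa using hlast⟩, rfl⟩
    | cons b L =>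
      obtain ⟨htrans, hchain⟩ := List.isChain_cons_cons.1 hchain
      obtain ⟨m, hm, rfl⟩ := sirTrans_iff.1 htrans
      obtain ⟨w, ⟨hw, hfold⟩, hscan⟩ :=
        ih (List.cons_ne_nil _ _) rfl (by simpa using hlast) hchain
      exact ⟨m :: w, ⟨⟨hm, hw⟩, hfold⟩, by rw [List.scanl_cons, hscan]⟩

theorem numSIRPaths_eq_ncard_sirWords (x y : Fin N → Fin 3) :
    numSIRPaths A x y = (sirWords A x y).ncard := by
  have hpaths : {L | IsSIRPath A x y L} = List.scanl bump x '' sirWords A x y := by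
    ext L
    exact ⟨exists_mem_sirWords_of_isSIRPath, by rintro ⟨w, hw, rfl⟩; exact isSIRPath_scanl hw⟩
  rw [numSIRPaths, hpaths, (List.scanl_injective bump_injective x).injOn.ncard_image]

theorem count_eq_of_mem_sirWords {x y : Fin N → Fin 3} {w : List (Fin N)}
    (hw : w ∈ sirWords A x y) (k : Fin N) : w.count k = (y k : ℕ) - x k := by
  rw [← hw.2, hw.1.val_foldl]
  omega

theorem finite_sirWords (x y : Fin N → Fin 3) : (sirWords A x y).Finite :=
  (List.finite_length_eq (Fin N) (∑ k, ((y k : ℕ) - x k))).subset fun w hw =>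
    show w.length = _ by simp only [← List.sum_count_eq_length, count_eq_of_mem_sirWords hw]

def infectedOn (s : Finset (Fin N)) : Fin N → Fin 3 := fun k => if k ∈ s then 1 else 0

theorem bump_infectedOn {s : Finset (Fin N)} {m : Fin N} (hm : m ∉ s) :
    bump (infectedOn s) m = infectedOn (insert m s) := by
  funext k
  by_cases hk : k = m
  · subst hk
    simp [infectedOn, hm]
  · simp [infectedOn, hk]

theorem exists_isSIRWord_infectedOn_univ {G : SimpleGraph (Fin N)} (hG : G.Connected)
    {s : Finset (Fin N)} (hs : s.Nonempty) :
    ∃ w, IsSIRWord G.Adj (infectedOn s) w ∧ w.foldl bump (infectedOn s) = infectedOn .univ := by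
  induction h : sᶜ.card generalizing s with
  | zero => exact ⟨[], trivial, by simp_all⟩
  | succ n ih =>
    obtain ⟨v, hv⟩ : ∃ v, v ∉ s := by
      simpa [Finset.Nonempty] using Finset.card_pos.1 (show 0 < sᶜ.card by omega)
    obtain ⟨u, hu⟩ := hs
    obtain ⟨d, -, hd_in, hd_out⟩ :=
      (hG.preconnected u v).some.exists_boundary_dart (s : Set (Fin N)) hu hv
    rw [Finset.mem_coe] at hd_in hd_out
    have hcard : (insert d.snd s)ᶜ.card = n := by
      rw [Finset.compl_insert, Finset.card_erase_of_mem (Finset.mem_compl.2 hd_out), h]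
      rfl
    obtain ⟨w, hw, hfold⟩ := ih (Finset.insert_nonempty _ _) hcard
    rw [← bump_infectedOn hd_out] at hw hfold
    have hinfect : CanBump G.Adj (infectedOn s) d.snd :=
      Or.inl ⟨by simp [infectedOn, hd_out], d.fst, d.adj, by simp [infectedOn, hd_in]⟩
    exact ⟨d.snd :: w, ⟨hinfect, hw⟩, hfold⟩

theorem isSIRWord_of_nodup {x : Fin N → Fin 3} {r : List (Fin N)} (hr : r.Nodup)
    (hx : ∀ m ∈ r, x m = 1) : IsSIRWord A x r := by
  induction r generalizing x with
  | nil => trivial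
  | cons m r ih =>
    obtain ⟨hm, hr⟩ := List.nodup_cons.1 hr
    refine ⟨Or.inr (hx m List.mem_cons_self), ih hr fun k hk => ?_⟩
    rw [bump_of_ne x (ne_of_mem_of_not_mem hk hm)]
    exact hx k (List.mem_cons_of_mem m hk)

theorem foldl_bump_of_nodup {x : Fin N → Fin 3} {r : List (Fin N)} (hr : r.Nodup)
    (hx : ∀ m ∈ r, x m = 1) (k : Fin N) : r.foldl bump x k = if k ∈ r then 2 else x k := by
  induction r generalizing x with
  | nil => simp
  | cons m r ih =>
    obtain ⟨hm, hr⟩ := List.nodup_cons.1 hr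
    rw [List.foldl_cons, ih hr fun j hj => ?_]
    · by_cases hkm : k = m
      · subst hkm
        simp [hm, hx k List.mem_cons_self]
      · simp [hkm]
    · rw [bump_of_ne x (ne_of_mem_of_not_mem hj hm)]
      exact hx j (List.mem_cons_of_mem m hj)

theorem factorial_le_ncard_sirWords {G : SimpleGraph (Fin N)} (hG : G.Connected)
    {s : Finset (Fin N)} (hs : s.Nonempty) :
    N.factorial ≤ (sirWords G.Adj (infectedOn s) fun _ => 2).ncard := by
  obtain ⟨w₀, hw₀, hfold₀⟩ := exists_isSIRWord_infectedOn_univ hG hs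
  have hinfected : ∀ m, infectedOn (N := N) .univ m = 1 := by simp [infectedOn]
  calc N.factorial = (Set.univ : Set (Equiv.Perm (Fin N))).ncard := by
        simp [Set.ncard_univ, Fintype.card_perm]
    _ ≤ _ := by
      refine Set.ncard_le_ncard_of_injOn (fun σ => w₀ ++ List.ofFn σ) (fun σ _ => ?_)
        (fun σ _ τ _ h =>
          Equiv.coe_fn_injective (List.ofFn_injective (List.append_cancel_left h)))
        (finite_sirWords _ _)
      have hσ : (List.ofFn σ).Nodup := List.nodup_ofFn.2 σ.injective
      refine ⟨hw₀.append (hfold₀ ▸ isSIRWord_of_nodup hσ fun m _ => hinfected m), ?_⟩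
      funext k
      rw [List.foldl_append, hfold₀, foldl_bump_of_nodup hσ fun m _ => hinfected m,
        if_pos (List.mem_ofFn.2 ⟨σ.symm k, σ.apply_symm_apply k⟩)]

theorem head?_ne_of_mem_sirWords {i₀ k : Fin N} (hk : k ≠ i₀) {w : List (Fin N)}
    (hw : w ∈ sirWords A (infectedOn {i₀}) fun _ => 2) : w.head? ≠ some i₀ := by
  intro hhead
  obtain ⟨w', rfl⟩ : ∃ w', w = i₀ :: w' := by cases w <;> simp_all
  obtain ⟨⟨-, hw'⟩, hfold⟩ := hw
  have hnone_infected : ∀ j, bump (infectedOn {i₀}) i₀ j ≠ 1 := by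
    intro j
    by_cases hj : j = i₀
    · subst hj
      simp [infectedOn]
    · simp [infectedOn, hj]
  rw [List.foldl_cons, hw'.eq_nil_of_forall_ne_one hnone_infected] at hfold
  simpa [infectedOn, hk] using congrFun hfold k

end SIR

/-- For any symmetric, irreflexive, connected adjacency relation on
`N ≥ 2` nodes, the number `P` of SIR paths from a configuration with exactly one
infected node (all others susceptible) to the all-recovered configuration
satisfies `N! ≤ P` and `2^(N−1)·P < (2N−1)!`. -/
theorem stmt1 (N : ℕ) (hN : 2 ≤ N) (A : Fin N → Fin N → Prop)
    (hsymm : ∀ j m : Fin N, A j m → A m j) (hirr : ∀ j : Fin N, ¬ A j j)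
    (hconn : (SimpleGraph.mk A ⟨fun j m h => hsymm j m h⟩
      ⟨fun j h => hirr j h⟩).Connected)
    (i0 : Fin N) (P : ℕ)
    (hP : P = numSIRPaths A (fun k => if k = i0 then 1 else 0) (fun _ => 2)) :
    Nat.factorial N ≤ P ∧ 2 ^ (N - 1) * P < Nat.factorial (2 * N - 1) := by
  have hx₀ : (fun k => if k = i0 then 1 else 0 : Fin N → Fin 3) = SIR.infectedOn {i0} := by
    funext k
    simp [SIR.infectedOn]
  have : Nontrivial (Fin N) := Fin.nontrivial_iff_two_le.2 hN
  obtain ⟨k, hk⟩ := exists_ne i0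
  rw [hP, hx₀, SIR.numSIRPaths_eq_ncard_sirWords]
  refine ⟨SIR.factorial_le_ncard_sirWords hconn (Finset.singleton_nonempty i0), ?_⟩
  have hcount : ∀ w ∈ SIR.sirWords A (SIR.infectedOn {i0}) (fun _ => 2), ∀ m,
      w.count m = if m = i0 then 1 else 2 := by
    intro w hw m
    rw [SIR.count_eq_of_mem_sirWords hw]
    by_cases hm : m = i0 <;> simp [SIR.infectedOn, hm]
  simpa using two_pow_mul_ncard_lt i0 _ hcount fun w hw => SIR.head?_ne_of_mem_sirWords hk hw
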